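/- arXiv:1601.01875 — 5 statements merged into one kernel-verified Lean document; each statement's English description precedes it below -/
import Mathlib

section
/- Polar decomposition of matrices (Theorem 2.8): Let A be an invertible real n×n matrix and let Σ₀ be a symmetric positive definite n×n matrix. Then there exist a unique symmetric positive definite matrix P and a unique matrix Q satisfying Q Σ₀ Qᵀ = Σ₀ such that A = P Q. -/
/-!
Write `A = P * Q` with `P` self-adjoint. Then `Q * S₀ * Qᵀ = S₀` holds exactly when `P` solves the
Riccati equation `P * S₀ * P = A * S₀ * Aᵀ`. Conjugating by `√S₀` turns this equation into
`(√S₀ P √S₀)² = √S₀ (A S₀ Aᵀ) √S₀`, whose unique positive solution is a square root; hence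
`P = S₀^(-1/2) (√S₀ (A S₀ Aᵀ) √S₀)^(1/2) S₀^(-1/2)` is the only choice, and `Q = P⁻¹ A`.
-/

open Matrix

/-- A real square matrix is symmetric positive definite. -/
def IsSPD {n : ℕ} (M : Matrix (Fin n) (Fin n) ℝ) : Prop :=
  Mᵀ = M ∧ ∀ x : Fin n → ℝ, x ≠ 0 → 0 < x ⬝ᵥ (M *ᵥ x)

lemma IsSelfAdjoint.mul_mul_star_eq {R : Type*} [Semiring R] [StarRing R] {p : R}
    (hp : IsSelfAdjoint p) (q s : R) : p * q * s * star (p * q) = p * (q * s * star q) * p := by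
  rw [star_mul, hp.star_eq]
  simp only [mul_assoc]

section PolarDecomposition

open CFC Ring

variable {A : Type*} [PartialOrder A] [Ring A] [StarRing A] [TopologicalSpace A]
  [StarOrderedRing A] [Algebra ℝ A] [ContinuousFunctionalCalculus ℝ A IsSelfAdjoint]
  [NonnegSpectrumClass ℝ A] [IsSemitopologicalRing A]

lemma CFC.conjSqrt_nonneg (c : A) {a : A} (ha : 0 ≤ a) : 0 ≤ conjSqrt c a :=
  map_zero (conjSqrt c) ▸ conjSqrt_le_conjSqrt ha

variable [T2Space A]

lemma CFC.conjSqrt_mul_conjSqrt {c : A} (hc : 0 ≤ c) (a : A) :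
    conjSqrt c a * conjSqrt c a = conjSqrt c (a * c * a) := by
  simp only [conjSqrt_apply, mul_assoc]
  rw [← mul_assoc (sqrt c) (sqrt c), sqrt_mul_sqrt_self c hc]

lemma CFC.eq_conjSqrt_sqrt_of_mul_mul_self_eq {s m x : A} (hs : IsStrictlyPositive s)
    (hx : 0 ≤ x) (h : x * s * x = m) : x = conjSqrt s⁻¹ʳ (sqrt (conjSqrt s m)) := by
  rw [← h, sqrt_unique (conjSqrt_mul_conjSqrt hs.nonneg x) (conjSqrt_nonneg s hx),
    conjSqrt_ringInverse_conjSqrt s x hs]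

lemma CFC.conjSqrt_sqrt_mul_mul_self {s m : A} (hs : IsStrictlyPositive s) (hm : 0 ≤ m) :
    conjSqrt s⁻¹ʳ (sqrt (conjSqrt s m)) * s * conjSqrt s⁻¹ʳ (sqrt (conjSqrt s m)) = m := by
  have key := conjSqrt_mul_conjSqrt hs.nonneg (conjSqrt s⁻¹ʳ (sqrt (conjSqrt s m)))
  rw [conjSqrt_conjSqrt_ringInverse s _ hs, sqrt_mul_sqrt_self _ (conjSqrt_nonneg s hm)] at key
  have := congrArg (conjSqrt s⁻¹ʳ) key
  rwa [conjSqrt_ringInverse_conjSqrt s _ hs, conjSqrt_ringInverse_conjSqrt s _ hs, eq_comm] at this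

theorem existsUnique_isStrictlyPositive_mul_mul_self_eq {s m : A} (hs : IsStrictlyPositive s)
    (hm : IsStrictlyPositive m) : ∃! x : A, IsStrictlyPositive x ∧ x * s * x = m := by
  refine ⟨conjSqrt s⁻¹ʳ (sqrt (conjSqrt s m)), ⟨?_, conjSqrt_sqrt_mul_mul_self hs hm.nonneg⟩,
    fun x hx => eq_conjSqrt_sqrt_of_mul_mul_self_eq hs hx.1.nonneg hx.2⟩
  rw [isStrictlyPositive_conjSqrt_iff _ _ hs.ringInverse]
  exact IsStrictlyPositive.sqrt _ ((isStrictlyPositive_conjSqrt_iff s m hs).mpr hm)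

theorem exists_polarDecomposition {a s : A} (ha : IsUnit a) (hs : IsStrictlyPositive s) :
    ∃ p q : A, IsStrictlyPositive p ∧ (IsUnit q ∧ q * s * star q = s) ∧ a = p * q ∧
      ∀ p' q' : A, IsStrictlyPositive p' → (IsUnit q' ∧ q' * s * star q' = s) → a = p' * q' →
        p' = p ∧ q' = q := by
  obtain ⟨p, ⟨hp, hpsp⟩, huniq⟩ := existsUnique_isStrictlyPositive_mul_mul_self_eq hs
    (ha.isStrictlyPositive_star_right_conjugate_iff.mpr hs)
  have hpa : a = p * (p⁻¹ʳ * a) := (mul_inverse_cancel_left p a hp.isUnit).symm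
  refine ⟨p, p⁻¹ʳ * a, hp, ⟨hp.isUnit.ringInverse.mul ha, ?_⟩, hpa, ?_⟩
  · apply hp.isUnit.mul_left_cancel
    apply hp.isUnit.mul_right_cancel
    rw [← hp.isSelfAdjoint.mul_mul_star_eq, ← hpa, hpsp]
  · rintro p' q' hp' ⟨-, hq'⟩ rfl
    obtain rfl : p' = p := huniq p' ⟨hp', by rw [hp'.isSelfAdjoint.mul_mul_star_eq, hq']⟩
    exact ⟨rfl, (inverse_mul_cancel_left p' q' hp.isUnit).symm⟩

end PolarDecomposition

lemma Matrix.transpose_eq_star {n α : Type*} [Star α] [TrivialStar α] (M : Matrix n n α) :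
    Mᵀ = star M := by
  rw [star_eq_conjTranspose, conjTranspose_eq_transpose_of_trivial]

open scoped MatrixOrder in
lemma isSPD_iff_isStrictlyPositive {n : ℕ} (M : Matrix (Fin n) (Fin n) ℝ) :
    IsSPD M ↔ IsStrictlyPositive M := by
  rw [isStrictlyPositive_iff_posDef, posDef_iff_dotProduct_mulVec, IsHermitian,
    conjTranspose_eq_transpose_of_trivial]
  simp only [IsSPD, star_trivial]

/-- Polar decomposition of matrices (Theorem 2.8): for an invertible `A` and a symmetric
positive definite `S₀`, there exist a unique symmetric positive definite `P` and a unique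
`Q ∈ O(n, S₀)` (i.e. invertible with `Q S₀ Qᵀ = S₀`) such that `A = P Q`. -/
theorem polar_decomposition_of_matrices {n : ℕ} (A S₀ : Matrix (Fin n) (Fin n) ℝ)
    (hA : IsUnit A) (hS₀ : IsSPD S₀) :
    ∃ P Q : Matrix (Fin n) (Fin n) ℝ,
      IsSPD P ∧ (IsUnit Q ∧ Q * S₀ * Qᵀ = S₀) ∧ A = P * Q ∧
      (∀ P' Q' : Matrix (Fin n) (Fin n) ℝ,
        IsSPD P' → (IsUnit Q' ∧ Q' * S₀ * Q'ᵀ = S₀) → A = P' * Q' → P' = P ∧ Q' = Q) := by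
  open scoped MatrixOrder in
  simpa only [isSPD_iff_isStrictlyPositive, transpose_eq_star] using
    exists_polarDecomposition hA ((isSPD_iff_isStrictlyPositive S₀).mp hS₀)
end

section
/- Hessian of the lifted relative entropy (Lemma 2.12): Let Σ₀ and Σ₁ be symmetric positive definite n×n real matrices and define F on invertible matrices by F(B) = n/2 − ½ tr(Σ₁⁻¹ B Σ₀ Bᵀ) + log det B + ½ log(det Σ₀ / det Σ₁). Let A be invertible with det A > 0 and let Ȧ be any n×n matrix, and let γ(t) = A + t Ȧ. Then the second derivative of t ↦ F(γ(t)) at t = 0 equals −tr(Ȧ A⁻¹ Ȧ A⁻¹) − tr(Σ₀ Ȧᵀ Σ₁⁻¹ Ȧ). -/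
/-!
Along the line `t ↦ A + t Ȧ` the trace term is a quadratic polynomial in `t`, with second
derivative `2 tr(S₁⁻¹ Ȧ S₀ Ȧᵀ)`. For the log-determinant, `det (B + s Ȧ) = det B · det (1 + s B⁻¹ Ȧ)`
and the coefficient of `s` in `det (1 + s M)` is `tr M` (Jacobi's formula), so its first
derivative is `tr ((A + t Ȧ)⁻¹ Ȧ)` wherever `A + t Ȧ` is invertible, in particular near `t = 0`.
Differentiating the inverse once more, `d/dt (A + t Ȧ)⁻¹ = -A⁻¹ Ȧ A⁻¹` at `t = 0`, gives
`-tr (A⁻¹ Ȧ A⁻¹ Ȧ)`.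
-/

open Matrix

open Polynomial Topology

-- Matrices carry no global norm; the operator norm is only used inside proofs, and the
-- statements below only involve the (norm-independent) product topology.
attribute [local instance] Matrix.linftyOpNormedAddCommGroup Matrix.linftyOpNormedSpace
  Matrix.linftyOpNormedRing Matrix.linftyOpNormedAlgebra

section Determinant

variable {𝕜 ι : Type*} [NontriviallyNormedField 𝕜] [Fintype ι] [DecidableEq ι]

theorem hasDerivAt_det_one_add_smul (M : Matrix ι ι 𝕜) :
    HasDerivAt (fun t : 𝕜 => (1 + t • M).det) M.trace 0 := by
  have heval : ∀ t : 𝕜, (1 + t • M).det = (det (1 + (X : 𝕜[X]) • M.map C)).eval t := by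
    intro t
    rw [← coe_evalRingHom, RingHom.map_det]
    congr 1
    ext i j
    by_cases hij : i = j <;> simp [hij] <;> ring
  have hpoly := (det (1 + (X : 𝕜[X]) • M.map C)).hasDerivAt 0
  rw [derivative_det_one_add_X_smul] at hpoly
  simpa only [heval] using hpoly

theorem hasDerivAt_det_add_smul (A D : Matrix ι ι 𝕜) {t : 𝕜} (h : IsUnit (A + t • D).det) :
    HasDerivAt (fun s : 𝕜 => (A + s • D).det)
      ((A + t • D).det * ((A + t • D)⁻¹ * D).trace) t := by
  set B := A + t • D with hB
  have hfac : ∀ s : 𝕜, A + s • D = B * (1 + (s - t) • (B⁻¹ * D)) := by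
    intro s
    rw [Matrix.mul_add, Matrix.mul_one, Matrix.mul_smul, ← Matrix.mul_assoc,
      Matrix.mul_nonsing_inv _ h, Matrix.one_mul, hB]
    module
  have h0 : HasDerivAt (fun s : 𝕜 => (1 + s • (B⁻¹ * D)).det) (B⁻¹ * D).trace (t - t) := by
    rw [sub_self]; exact hasDerivAt_det_one_add_smul _
  simp only [hfac, det_mul]
  exact (h0.comp_sub_const t t).const_mul B.det

theorem eventually_det_add_smul_ne_zero (A D : Matrix ι ι 𝕜) (h : A.det ≠ 0) :
    ∀ᶠ t in 𝓝 (0 : 𝕜), (A + t • D).det ≠ 0 := by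
  have hcont : Continuous fun t : 𝕜 => (A + t • D).det := by fun_prop
  simpa using hcont.continuousAt.eventually_ne (by simpa using h)

end Determinant

theorem hasDerivAt_log_det_add_smul {ι : Type*} [Fintype ι] [DecidableEq ι]
    (A D : Matrix ι ι ℝ) {t : ℝ} (h : (A + t • D).det ≠ 0) :
    HasDerivAt (fun s : ℝ => Real.log (A + s • D).det) ((A + t • D)⁻¹ * D).trace t := by
  convert (hasDerivAt_det_add_smul A D h.isUnit).log h using 1
  field_simp

section Inverse

variable {𝕜 ι : Type*} [RCLike 𝕜] [Fintype ι]

theorem HasDerivAt.matrix_trace {f : 𝕜 → Matrix ι ι 𝕜} {f' : Matrix ι ι 𝕜} {x : 𝕜}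
    (hf : HasDerivAt f f' x) : HasDerivAt (fun t => (f t).trace) f'.trace x :=
  (LinearMap.toContinuousLinearMap (traceLinearMap ι 𝕜 𝕜)).hasFDerivAt.comp_hasDerivAt x hf

theorem hasDerivAt_inv_add_smul [DecidableEq ι] (A D : Matrix ι ι 𝕜) (h : IsUnit A.det) :
    HasDerivAt (fun t : 𝕜 => (A + t • D)⁻¹) (-(A⁻¹ * D * A⁻¹)) 0 := by
  obtain ⟨u, hu⟩ := (isUnit_iff_isUnit_det A).mpr h
  have hline : HasDerivAt (fun t : 𝕜 => A + t • D) D 0 :=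
    (((hasDerivAt_id (0 : 𝕜)).smul_const D).const_add A).congr_deriv (one_smul 𝕜 D)
  have hu0 : (u : Matrix ι ι 𝕜) = A + (0 : 𝕜) • D := by rw [zero_smul, add_zero, hu]
  have hinv := (hu0 ▸ hasFDerivAt_ringInverse (𝕜 := 𝕜) u).comp_hasDerivAt (0 : 𝕜) hline
  have hfun : (fun t : 𝕜 => (A + t • D)⁻¹) = Ring.inverse ∘ fun t => A + t • D := by
    funext t
    simp [nonsing_inv_eq_ringInverse]
  have hval : (-ContinuousLinearMap.mulLeftRight 𝕜 _ ↑u⁻¹ ↑u⁻¹) D = -(A⁻¹ * D * A⁻¹) := by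
    simp [coe_units_inv, hu]
  rw [hfun, ← hval]
  exact hinv

end Inverse

theorem trace_mul_add_smul_mul_transpose {𝕜 m p : Type*} [Field 𝕜] [Fintype m] [Fintype p]
    (P : Matrix m m 𝕜) (Q : Matrix p p 𝕜) (A D : Matrix m p 𝕜) (s : 𝕜) :
    (P * (A + s • D) * Q * (A + s • D)ᵀ).trace =
      (P * A * Q * Aᵀ).trace + ((P * D * Q * Aᵀ).trace + (P * A * Q * Dᵀ).trace) * s
        + (P * D * Q * Dᵀ).trace * s ^ 2 := by
  simp only [transpose_add, transpose_smul, Matrix.mul_add, Matrix.add_mul, Matrix.mul_smul,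
    Matrix.smul_mul, trace_add, trace_smul, smul_eq_mul]
  ring

section Quadratic

variable {𝕜 m p : Type*} [NontriviallyNormedField 𝕜] [Fintype m] [Fintype p]
  (P : Matrix m m 𝕜) (Q : Matrix p p 𝕜) (A D : Matrix m p 𝕜)

theorem hasDerivAt_trace_mul_add_smul_mul_transpose (t : 𝕜) :
    HasDerivAt (fun s : 𝕜 => (P * (A + s • D) * Q * (A + s • D)ᵀ).trace)
      ((P * D * Q * Aᵀ).trace + (P * A * Q * Dᵀ).trace + 2 * (P * D * Q * Dᵀ).trace * t) t := by
  simp only [trace_mul_add_smul_mul_transpose]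
  have hlin := (hasDerivAt_id t).const_mul ((P * D * Q * Aᵀ).trace + (P * A * Q * Dᵀ).trace)
  have hsq := (hasDerivAt_pow 2 t).const_mul (P * D * Q * Dᵀ).trace
  exact ((hlin.const_add (P * A * Q * Aᵀ).trace).add hsq).congr_deriv
    (by simp only [mul_one, Nat.cast_ofNat, Nat.add_one_sub_one, pow_one]; ring)

theorem hasDerivAt_deriv_trace_mul_add_smul_mul_transpose (t : 𝕜) :
    HasDerivAt (deriv fun s : 𝕜 => (P * (A + s • D) * Q * (A + s • D)ᵀ).trace)
      (2 * (Q * Dᵀ * P * D).trace) t := by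
  have hcycle : (P * D * Q * Dᵀ).trace = (Q * Dᵀ * P * D).trace := by
    rw [Matrix.mul_assoc, trace_mul_comm, ← Matrix.mul_assoc]
  rw [← hcycle, funext fun s => (hasDerivAt_trace_mul_add_smul_mul_transpose P Q A D s).deriv]
  simpa using ((hasDerivAt_id t).const_mul (2 * (P * D * Q * Dᵀ).trace)).const_add
    ((P * D * Q * Aᵀ).trace + (P * A * Q * Dᵀ).trace)

end Quadratic

theorem hasDerivAt_deriv_log_det_add_smul {ι : Type*} [Fintype ι] [DecidableEq ι]
    (A D : Matrix ι ι ℝ) (h : A.det ≠ 0) :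
    HasDerivAt (deriv fun t : ℝ => Real.log (A + t • D).det) (-(D * A⁻¹ * D * A⁻¹).trace) 0 := by
  have hderiv : deriv (fun t : ℝ => Real.log (A + t • D).det) =ᶠ[𝓝 0]
      fun t => ((A + t • D)⁻¹ * D).trace :=
    (eventually_det_add_smul_ne_zero A D h).mono fun t ht =>
      (hasDerivAt_log_det_add_smul A D ht).deriv
  have hsecond := ((hasDerivAt_inv_add_smul A D h.isUnit).mul_const D).matrix_trace
  rw [Matrix.neg_mul, trace_neg, trace_mul_cycle, ← Matrix.mul_assoc] at hsecond
  exact hsecond.congr_of_eventuallyEq hderiv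

theorem hessian_lifted_relative_entropy_general {n : ℕ}
    (S₀ S₁ A Adot : Matrix (Fin n) (Fin n) ℝ)
    (hA : 0 < A.det) :
    deriv (deriv (fun t : ℝ =>
        (n : ℝ) / 2 - (1 / 2) * (S₁⁻¹ * (A + t • Adot) * S₀ * (A + t • Adot)ᵀ).trace
          + Real.log (A + t • Adot).det + (1 / 2) * Real.log (S₀.det / S₁.det))) 0 =
      -(Adot * A⁻¹ * Adot * A⁻¹).trace - (S₀ * Adotᵀ * S₁⁻¹ * Adot).trace := by
  set q := fun t : ℝ => (S₁⁻¹ * (A + t • Adot) * S₀ * (A + t • Adot)ᵀ).trace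
  set ℓ := fun t : ℝ => Real.log (A + t • Adot).det
  have hq : ∀ t, HasDerivAt q (deriv q t) t := fun t =>
    (hasDerivAt_trace_mul_add_smul_mul_transpose _ _ _ _ t).differentiableAt.hasDerivAt
  have hℓ : ∀ᶠ t in 𝓝 0, HasDerivAt ℓ (deriv ℓ t) t :=
    (eventually_det_add_smul_ne_zero A Adot hA.ne').mono fun t ht =>
      (hasDerivAt_log_det_add_smul A Adot ht).differentiableAt.hasDerivAt
  have hfirst : deriv (fun t => (n : ℝ) / 2 - (1 / 2) * q t + ℓ t
      + (1 / 2) * Real.log (S₀.det / S₁.det)) =ᶠ[𝓝 0]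
      fun t => -(1 / 2) * deriv q t + deriv ℓ t := by
    filter_upwards [hℓ] with t hℓt
    exact ((((hq t).const_mul (1 / 2)).const_sub _).add hℓt).add_const _ |>.deriv.trans (by ring)
  have hsecond := ((hasDerivAt_deriv_trace_mul_add_smul_mul_transpose S₁⁻¹ S₀ A Adot 0).const_mul
    (-(1 / 2))).add (hasDerivAt_deriv_log_det_add_smul A Adot hA.ne')
  exact hfirst.deriv_eq.trans (hsecond.deriv.trans (by ring))

/-- Hessian of the lifted relative entropy (Lemma 2.12): along the straight line
`γ(t) = A + t Ȧ`, the second derivative at `t = 0` of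
`t ↦ F(γ(t)) = n/2 − ½ tr(S₁⁻¹ γ(t) S₀ γ(t)ᵀ) + log det γ(t) + ½ log(det S₀ / det S₁)`
equals `−tr(Ȧ A⁻¹ Ȧ A⁻¹) − tr(S₀ Ȧᵀ S₁⁻¹ Ȧ)`. -/
theorem hessian_lifted_relative_entropy {n : ℕ}
    (S₀ S₁ A Adot : Matrix (Fin n) (Fin n) ℝ)
    (hS₀ : IsSPD S₀) (hS₁ : IsSPD S₁) (hA : 0 < A.det) :
    deriv (deriv (fun t : ℝ =>
        (n : ℝ) / 2 - (1 / 2) * (S₁⁻¹ * (A + t • Adot) * S₀ * (A + t • Adot)ᵀ).trace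
          + Real.log (A + t • Adot).det + (1 / 2) * Real.log (S₀.det / S₁.det))) 0 =
      -(Adot * A⁻¹ * Adot * A⁻¹).trace - (S₀ * Adotᵀ * S₁⁻¹ * Adot).trace :=
  hessian_lifted_relative_entropy_general S₀ S₁ A Adot hA
end

section
/- Transversality of the polar cone and the fibers (Lemma 2.15): Let Σ₀ and P be symmetric positive definite n×n real matrices, and let Ṗ be a symmetric n×n real matrix. If tr(Σ₀ Ṗ S P) = 0 for every symmetric n×n matrix S, then Ṗ = 0. -/
/-!
Test the condition against the symmetric matrix `S = P⁻¹ Ṗ P⁻¹`, for which `S P = P⁻¹ Ṗ`: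
it gives `tr(S₀ Ṗ P⁻¹ Ṗ) = 0`. Writing `S₀ = Cᴴ C` and `P⁻¹ = Dᴴ D` with `C`, `D` invertible,
this trace is `tr(M Mᴴ)` for `M = C Ṗ Dᴴ`, so `M = 0` and hence `Ṗ = 0`.
-/

open Matrix

lemma IsSPD.posDef {n : ℕ} {M : Matrix (Fin n) (Fin n) ℝ} (h : IsSPD M) : M.PosDef := by
  refine .of_dotProduct_mulVec_pos ?_ fun x hx => by simpa using h.2 x hx
  rw [IsHermitian, conjTranspose_eq_transpose_of_trivial, h.1]

section
open scoped ComplexOrder MatrixOrder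

theorem Matrix.PosDef.eq_zero_of_trace_mul_mul_mul_conjTranspose_eq_zero
    {n 𝕜 : Type*} [Fintype n] [RCLike 𝕜] {A B X : Matrix n n 𝕜}
    (hA : A.PosDef) (hB : B.PosDef) (h : (A * X * B * Xᴴ).trace = 0) : X = 0 := by
  classical
  obtain ⟨C, hC, rfl⟩ :=
    CStarAlgebra.isStrictlyPositive_iff_eq_star_mul_self.mp hA.isStrictlyPositive
  obtain ⟨D, hD, rfl⟩ :=
    CStarAlgebra.isStrictlyPositive_iff_eq_star_mul_self.mp hB.isStrictlyPositive
  have hCXD : C * X * star D = 0 := by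
    rw [← trace_mul_conjTranspose_self_eq_zero_iff, ← h]
    simp only [Matrix.mul_assoc]
    rw [trace_mul_comm (star C)]
    simp only [star_eq_conjTranspose, conjTranspose_mul, conjTranspose_conjTranspose,
      Matrix.mul_assoc]
  rwa [hD.star.mul_left_eq_zero, hC.mul_right_eq_zero] at hCXD

end

/-- Transversality of the polar cone and the fibers (Lemma 2.15): if `S₀` and `P` are
symmetric positive definite, `Ṗ` is symmetric, and `tr(S₀ Ṗ S P) = 0` for every symmetric
`S`, then `Ṗ = 0`. -/
theorem polar_cone_transversal {n : ℕ} (S₀ P Pdot : Matrix (Fin n) (Fin n) ℝ)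
    (hS₀ : IsSPD S₀) (hP : IsSPD P) (hPdot : Pdotᵀ = Pdot)
    (h : ∀ S : Matrix (Fin n) (Fin n) ℝ, Sᵀ = S → (S₀ * Pdot * S * P).trace = 0) :
    Pdot = 0 := by
  have hPd : P.PosDef := hP.posDef
  have hS_symm : (P⁻¹ * Pdot * P⁻¹)ᵀ = P⁻¹ * Pdot * P⁻¹ := by
    simp only [transpose_mul, transpose_nonsing_inv, hP.1, hPdot, Matrix.mul_assoc]
  have hSP : S₀ * Pdot * (P⁻¹ * Pdot * P⁻¹) * P = S₀ * Pdot * P⁻¹ * Pdotᴴ := by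
    rw [conjTranspose_eq_transpose_of_trivial, hPdot]
    simp only [Matrix.mul_assoc, nonsing_inv_mul _ ((isUnit_iff_isUnit_det P).mp hPd.isUnit),
      Matrix.mul_one]
  refine hS₀.posDef.eq_zero_of_trace_mul_mul_mul_conjTranspose_eq_zero hPd.inv ?_
  rw [← hSP]
  exact h _ hS_symm
end

section
/- Unique maximum of the lifted entropy on the polar cone (part of Theorem 2.16): Let Σ₀ and Σ₁ be symmetric positive definite n×n real matrices, and define, for symmetric positive definite P, F(P) = n/2 − ½ tr(Σ₁⁻¹ P Σ₀ P) + log det P + ½ log(det Σ₀ / det Σ₁). Then F attains a unique maximum over the set of symmetric positive definite matrices; the maximizer P∞ is the unique symmetric positive definite matrix satisfying P∞ Σ₀ P∞ = Σ₁, the maximum value is F(P∞) = 0, and F(P) < 0 for every symmetric positive definite P ≠ P∞. -/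
/-!
With `r = √S₀`, the equation `P S₀ P = S₁` reads `(r P r)² = r S₁ r`, so its unique positive
definite solution is `P∞ = r⁻¹ √(r S₁ r) r⁻¹`. For positive definite `P`, the matrix
`M = S₁^{-1/2} (P S₀ P) S₁^{-1/2}` is positive definite and `F(P) = ½ (log det M - tr M + n)
= ½ ∑ᵢ (log λᵢ - λᵢ + 1)` over the eigenvalues `λᵢ` of `M`. Since `log λ ≤ λ - 1` with equality
only at `λ = 1`, `F(P) ≤ 0` with equality iff `M = 1`, i.e. iff `P S₀ P = S₁`.
-/

open Matrix

/-- The lifted relative entropy functional restricted to the polar cone: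
`F(P) = n/2 − ½ tr(S₁⁻¹ P S₀ P) + log det P + ½ log(det S₀ / det S₁)`. -/
noncomputable def liftedEntropy {n : ℕ} (S₀ S₁ P : Matrix (Fin n) (Fin n) ℝ) : ℝ :=
  (n : ℝ) / 2 - (1 / 2) * (S₁⁻¹ * P * S₀ * P).trace
    + Real.log P.det + (1 / 2) * Real.log (S₀.det / S₁.det)

namespace CFC

open Ring

variable {A : Type*} [PartialOrder A] [Ring A] [StarRing A] [TopologicalSpace A]
  [StarOrderedRing A] [Algebra ℝ A] [ContinuousFunctionalCalculus ℝ A IsSelfAdjoint]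
  [NonnegSpectrumClass ℝ A] [IsSemitopologicalRing A] [T2Space A]

lemma conjSqrt_injective {c : A} (hc : IsStrictlyPositive c) : Function.Injective (conjSqrt c) :=
  Function.LeftInverse.injective (conjSqrt_ringInverse_conjSqrt c · hc)

lemma conjSqrt_ringInverse_eq_one_iff {c a : A} (hc : IsStrictlyPositive c) :
    conjSqrt c⁻¹ʳ a = 1 ↔ a = c := by
  rw [← conjSqrt_ringInverse_self c hc, (conjSqrt_injective hc.ringInverse).eq_iff]

lemma conjSqrt_mul_conjSqrt_s17 {c : A} (hc : 0 ≤ c) (a b : A) :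
    conjSqrt c a * conjSqrt c b = conjSqrt c (a * c * b) := by
  simp only [conjSqrt_apply, mul_assoc]
  rw [← mul_assoc (sqrt c) (sqrt c), sqrt_mul_sqrt_self c hc]

theorem existsUnique_isStrictlyPositive_mul_mul_eq {a b : A} (ha : IsStrictlyPositive a)
    (hb : IsStrictlyPositive b) : ∃! p : A, IsStrictlyPositive p ∧ p * a * p = b := by
  have hsq (p : A) : p * a * p = b ↔ conjSqrt a p * conjSqrt a p = conjSqrt a b := by
    rw [conjSqrt_mul_conjSqrt_s17 ha.nonneg, (conjSqrt_injective ha).eq_iff]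
  have hb' : IsStrictlyPositive (conjSqrt a b) := (isStrictlyPositive_conjSqrt_iff a b ha).2 hb
  refine ⟨conjSqrt a⁻¹ʳ (sqrt (conjSqrt a b)), ⟨?_, ?_⟩, ?_⟩
  · rw [← isStrictlyPositive_conjSqrt_iff a _ ha, conjSqrt_conjSqrt_ringInverse a _ ha]
    exact hb'.sqrt
  · rw [hsq, conjSqrt_conjSqrt_ringInverse a _ ha]
    exact sqrt_mul_sqrt_self _ hb'.nonneg
  · rintro p ⟨hp, hpab⟩
    have hp' := (isStrictlyPositive_conjSqrt_iff a p ha).2 hp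
    rw [sqrt_unique ((hsq p).1 hpab) hp'.nonneg, conjSqrt_ringInverse_conjSqrt a p ha]

end CFC

open scoped MatrixOrder

namespace Matrix

variable {m 𝕜 : Type*} [Fintype m] [DecidableEq m] [RCLike 𝕜]

lemma trace_conjSqrt {c : Matrix m m 𝕜} (hc : 0 ≤ c) (a : Matrix m m 𝕜) :
    (CFC.conjSqrt c a).trace = (c * a).trace := by
  rw [CFC.conjSqrt_apply, trace_mul_cycle, CFC.sqrt_mul_sqrt_self c hc]

lemma det_conjSqrt {c : Matrix m m 𝕜} (hc : 0 ≤ c) (a : Matrix m m 𝕜) :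
    (CFC.conjSqrt c a).det = c.det * a.det := by
  rw [CFC.conjSqrt_apply, det_mul, det_mul, mul_right_comm, ← det_mul,
    CFC.sqrt_mul_sqrt_self c hc]

lemma IsHermitian.eq_one_of_eigenvalues_eq_one {M : Matrix m m 𝕜} (hM : M.IsHermitian)
    (h : ∀ i, hM.eigenvalues i = 1) : M = 1 := by
  refine CFC.eq_one_of_spectrum_subset_one (R := ℝ) M ?_ hM.isSelfAdjoint
  rw [hM.spectrum_real_eq_range_eigenvalues]
  rintro _ ⟨i, rfl⟩
  exact h i

theorem PosDef.log_det_lt_trace_sub_card {M : Matrix m m ℝ} (hM : M.PosDef) (hne : M ≠ 1) :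
    Real.log M.det < M.trace - Fintype.card m := by
  set μ := hM.isHermitian.eigenvalues
  have hμ : ∀ i, 0 < μ i := hM.eigenvalues_pos
  obtain ⟨i₀, hi₀⟩ : ∃ i, μ i ≠ 1 := by
    by_contra! h
    exact hne (hM.isHermitian.eq_one_of_eigenvalues_eq_one h)
  have hdet : M.det = ∏ i, μ i := by simpa using hM.isHermitian.det_eq_prod_eigenvalues
  have htr : M.trace = ∑ i, μ i := by simpa using hM.isHermitian.trace_eq_sum_eigenvalues
  calc Real.log M.det = ∑ i, Real.log (μ i) := by
        rw [hdet, Real.log_prod fun i _ => (hμ i).ne']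
    _ < ∑ i, (μ i - 1) := Finset.sum_lt_sum (fun i _ => Real.log_le_sub_one_of_pos (hμ i))
        ⟨i₀, Finset.mem_univ _, Real.log_lt_sub_one_of_pos (hμ i₀) hi₀⟩
    _ = M.trace - Fintype.card m := by simp [htr, Finset.sum_sub_distrib]

end Matrix

lemma isSPD_iff_posDef {n : ℕ} {M : Matrix (Fin n) (Fin n) ℝ} : IsSPD M ↔ M.PosDef := by
  simp only [IsSPD, posDef_iff_dotProduct_mulVec, IsHermitian,
    conjTranspose_eq_transpose_of_trivial, star_trivial]

section liftedEntropy

variable {n : ℕ} {S₀ S₁ P : Matrix (Fin n) (Fin n) ℝ}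

lemma liftedEntropy_eq_log_det_sub_trace (hS₀ : S₀.det ≠ 0) (hS₁ : S₁.PosDef)
    (hP : P.det ≠ 0) :
    liftedEntropy S₀ S₁ P = (Real.log (CFC.conjSqrt S₁⁻¹ (P * S₀ * P)).det
      - ((CFC.conjSqrt S₁⁻¹ (P * S₀ * P)).trace - n)) / 2 := by
  have hS₁inv : 0 ≤ S₁⁻¹ := hS₁.inv.posSemidef.nonneg
  have hdet : S₁⁻¹.det * (P * S₀ * P).det = P.det ^ 2 * (S₀.det / S₁.det) := by
    rw [det_nonsing_inv, Ring.inverse_eq_inv', det_mul, det_mul]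
    ring
  rw [liftedEntropy, trace_conjSqrt hS₁inv, det_conjSqrt hS₁inv, hdet,
    Real.log_mul (pow_ne_zero 2 hP) (div_ne_zero hS₀ hS₁.det_pos.ne'), Real.log_pow,
    ← Matrix.mul_assoc, ← Matrix.mul_assoc]
  push_cast
  ring

lemma conjSqrt_inv_mul_mul_eq_one_iff (hS₁ : S₁.PosDef) :
    CFC.conjSqrt S₁⁻¹ (P * S₀ * P) = 1 ↔ P * S₀ * P = S₁ := by
  rw [nonsing_inv_eq_ringInverse, CFC.conjSqrt_ringInverse_eq_one_iff hS₁.isStrictlyPositive]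

lemma liftedEntropy_eq_zero (hS₀ : S₀.det ≠ 0) (hS₁ : S₁.PosDef) (hP : P.det ≠ 0)
    (hsol : P * S₀ * P = S₁) : liftedEntropy S₀ S₁ P = 0 := by
  rw [liftedEntropy_eq_log_det_sub_trace hS₀ hS₁ hP,
    (conjSqrt_inv_mul_mul_eq_one_iff hS₁).2 hsol]
  simp

lemma liftedEntropy_neg (hS₀ : S₀.PosDef) (hS₁ : S₁.PosDef) (hP : P.PosDef)
    (hsol : P * S₀ * P ≠ S₁) : liftedEntropy S₀ S₁ P < 0 := by
  have hM : (CFC.conjSqrt S₁⁻¹ (P * S₀ * P)).PosDef :=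
    ((CFC.isStrictlyPositive_conjSqrt_iff _ _ hS₁.inv.isStrictlyPositive).2
      (IsStrictlyPositive.conjugate_of_isUnit_of_isSelfAdjoint S₀ P hP.isUnit hP.isHermitian
        hS₀.isStrictlyPositive)).posDef
  have := hM.log_det_lt_trace_sub_card (mt (conjSqrt_inv_mul_mul_eq_one_iff hS₁).1 hsol)
  rw [liftedEntropy_eq_log_det_sub_trace hS₀.det_pos.ne' hS₁ hP.det_pos.ne']
  rw [Fintype.card_fin] at this
  linarith

end liftedEntropy

/-- Unique maximum of the lifted entropy on the polar cone (part of Theorem 2.16): `F` attains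
a unique maximum over symmetric positive definite matrices; the maximizer `P∞` is the unique
symmetric positive definite solution of `P∞ S₀ P∞ = S₁`, the maximum value is `F(P∞) = 0`, and
`F(P) < 0` for every other symmetric positive definite `P`. -/
theorem lifted_entropy_unique_max {n : ℕ} (S₀ S₁ : Matrix (Fin n) (Fin n) ℝ)
    (hS₀ : IsSPD S₀) (hS₁ : IsSPD S₁) :
    ∃ Pinf : Matrix (Fin n) (Fin n) ℝ,
      IsSPD Pinf ∧ Pinf * S₀ * Pinf = S₁ ∧
      (∀ P : Matrix (Fin n) (Fin n) ℝ, IsSPD P → P * S₀ * P = S₁ → P = Pinf) ∧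
      liftedEntropy S₀ S₁ Pinf = 0 ∧
      (∀ P : Matrix (Fin n) (Fin n) ℝ, IsSPD P → P ≠ Pinf → liftedEntropy S₀ S₁ P < 0) := by
  simp only [isSPD_iff_posDef] at *
  obtain ⟨Pinf, ⟨hPinf, hsol⟩, huniq⟩ := CFC.existsUnique_isStrictlyPositive_mul_mul_eq
    hS₀.isStrictlyPositive hS₁.isStrictlyPositive
  have huniq' (P : Matrix (Fin n) (Fin n) ℝ) (hP : P.PosDef) (hPsol : P * S₀ * P = S₁) :
      P = Pinf :=
    huniq P ⟨hP.isStrictlyPositive, hPsol⟩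
  exact ⟨Pinf, hPinf.posDef, hsol, huniq',
    liftedEntropy_eq_zero hS₀.det_pos.ne' hS₁ hPinf.posDef.det_pos.ne' hsol,
    fun P hP hne => liftedEntropy_neg hS₀ hS₁ hP (mt (huniq' P hP) hne)⟩
end

section
/- Double bracket form of the entropy gradient flow (Corollary 3.20): Let N be an n×n real matrix and let W : ℝ → (n×n real matrices) be a differentiable curve of invertible matrices satisfying Ẇ(t) = ½ [W(t), [W(t)⁻¹, N]] for all t. Then the curve Σ(t) = W(t)⁻¹ satisfies the double bracket equation Σ̇(t) = ½ [Σ(t), [Σ(t), N]] for all t. -/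
/-!
Inversion has derivative `Σ̇ = -Σ Ẇ Σ`, and conjugating a commutator by `Σ = W⁻¹`
turns `[W, X]` into `[X, Σ]`; with `X = [Σ, N]` this is `½ [Σ, [Σ, N]]`.
-/

section RingInverse

variable {𝕜 R : Type*} [NontriviallyNormedField 𝕜] [NormedRing R] [HasSummableGeomSeries R]
  [NormedAlgebra 𝕜 R] {f : 𝕜 → R} {f' : R} {x : 𝕜}

theorem HasDerivAt.ringInverse (hf : HasDerivAt f f' x) (hx : IsUnit (f x)) :
    HasDerivAt (fun y => Ring.inverse (f y))
      (-(Ring.inverse (f x) * f' * Ring.inverse (f x))) x := by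
  obtain ⟨u, hu⟩ := hx
  have hinv : HasFDerivAt Ring.inverse _ (f x) := hu ▸ hasFDerivAt_ringInverse (𝕜 := 𝕜) u
  rw [← hu, Ring.inverse_unit]
  simpa [Function.comp_def] using hinv.comp_hasDerivAt x hf

end RingInverse

namespace Matrix

variable {𝕜 m n : Type*} [NontriviallyNormedField 𝕜] [Fintype n]

theorem hasDerivAt_iff {W : 𝕜 → Matrix m n 𝕜} {W' : Matrix m n 𝕜} {t : 𝕜} :
    HasDerivAt W W' t ↔ ∀ i j, HasDerivAt (fun s => W s i j) (W' i j) t :=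
  hasDerivAt_pi.trans <| forall_congr' fun _ => hasDerivAt_pi

end Matrix

theorem HasDerivAt.matrix_inv {𝕜 m : Type*} [NontriviallyNormedField 𝕜] [CompleteSpace 𝕜]
    [Fintype m] [DecidableEq m] {W : 𝕜 → Matrix m m 𝕜} {W' : Matrix m m 𝕜} {t : 𝕜}
    (hW : HasDerivAt W W' t) (ht : IsUnit (W t)) :
    HasDerivAt (fun s => (W s)⁻¹) (-((W t)⁻¹ * W' * (W t)⁻¹)) t := by
  -- Matrices carry the product topology; to use `Ring.inverse` we pass through a Banach algebra
  -- norm, with `e` the identity to the product space and completeness stated for the norm's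
  -- uniformity (not the default one on `Matrix`).
  let _ : NormedRing (Matrix m m 𝕜) := Matrix.linftyOpNormedRing
  let _ : NormedAlgebra 𝕜 (Matrix m m 𝕜) := Matrix.linftyOpNormedAlgebra
  let e : Matrix m m 𝕜 ≃L[𝕜] (m → m → 𝕜) :=
    (LinearEquiv.refl 𝕜 (Matrix m m 𝕜)).toContinuousLinearEquiv
  have : @CompleteSpace (Matrix m m 𝕜) PseudoMetricSpace.toUniformSpace :=
    FiniteDimensional.complete 𝕜 _
  have hWn := e.symm.hasFDerivAt.comp_hasDerivAt t
    (hasDerivAt_pi.2 fun i => hasDerivAt_pi.2 (Matrix.hasDerivAt_iff.1 hW i))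
  have h := e.hasFDerivAt.comp_hasDerivAt t (hWn.ringInverse ht)
  simp only [← Matrix.nonsing_inv_eq_ringInverse] at h
  exact Matrix.hasDerivAt_iff.2 fun i j => hasDerivAt_pi.1 (hasDerivAt_pi.1 h i) j

theorem Matrix.inv_mul_commutator_mul_inv {R m : Type*} [CommRing R] [Fintype m] [DecidableEq m]
    {A B : Matrix m m R} (hA : IsUnit A) : A⁻¹ * (A * B - B * A) * A⁻¹ = B * A⁻¹ - A⁻¹ * B := by
  have hdet := (isUnit_iff_isUnit_det A).mp hA
  calc A⁻¹ * (A * B - B * A) * A⁻¹ = (A⁻¹ * A) * (B * A⁻¹) - (A⁻¹ * B) * (A * A⁻¹) := by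
        noncomm_ring
    _ = B * A⁻¹ - A⁻¹ * B := by
        rw [nonsing_inv_mul A hdet, mul_nonsing_inv A hdet, one_mul, mul_one]

/-- Double bracket form of the entropy gradient flow (Corollary 3.20): if a differentiable
curve `W(t)` of invertible matrices satisfies `Ẇ = ½ [W, [W⁻¹, N]]`, then `Σ(t) = W(t)⁻¹`
satisfies `Σ̇ = ½ [Σ, [Σ, N]]`, where `[A, B] = A B − B A`. -/
theorem double_bracket_flow {n : ℕ} (N : Matrix (Fin n) (Fin n) ℝ)
    (W : ℝ → Matrix (Fin n) (Fin n) ℝ)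
    (hinv : ∀ t : ℝ, IsUnit (W t))
    (hW : ∀ (t : ℝ) (i j : Fin n),
      HasDerivAt (fun s => W s i j)
        (((1 / 2 : ℝ) • (W t * ((W t)⁻¹ * N - N * (W t)⁻¹)
            - ((W t)⁻¹ * N - N * (W t)⁻¹) * W t)) i j) t) :
    ∀ (t : ℝ) (i j : Fin n),
      HasDerivAt (fun s => (W s)⁻¹ i j)
        (((1 / 2 : ℝ) • ((W t)⁻¹ * ((W t)⁻¹ * N - N * (W t)⁻¹)
            - ((W t)⁻¹ * N - N * (W t)⁻¹) * (W t)⁻¹)) i j) t := by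
  intro t
  have hW' := (Matrix.hasDerivAt_iff.2 (hW t)).matrix_inv (hinv t)
  rw [mul_smul_comm, smul_mul_assoc, Matrix.inv_mul_commutator_mul_inv (hinv t), ← smul_neg,
    neg_sub] at hW'
  exact Matrix.hasDerivAt_iff.1 hW'
end
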